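/- arXiv:1807.01040 — 2 statements merged into one kernel-verified Lean document; each statement's English description precedes it below -/
import Mathlib

section
/- Let Y = Σ_k α_k(x) D_k be a first-order operator with real smooth coefficients on an open set Ω ⊂ ℝ^n, let g ∈ C^∞(Ω; ℝ), let K ⊂ Ω be compact, and suppose there is c₀ > 0 with i Y g ≥ c₀ on K. Then for all λ > 0 and all φ ∈ C_0^∞(K), Im (e^{λg} Y* φ, e^{λg} φ)_{L²} ≥ λ c₀ ‖e^{λg} φ‖_{L²}² − (1/2) ‖d_Y‖_{L^∞(K)} ‖e^{λg} φ‖_{L²}². -/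
open MeasureTheory

/-- The first-order operator `Y(x,D) = ∑ α_k(x) D_k` with real coefficients,
`D_k = -i ∂_k`. -/
noncomputable def opR (n : ℕ) (α : Fin n → (Fin n → ℝ) → ℝ)
    (w : (Fin n → ℝ) → ℂ) (x : Fin n → ℝ) : ℂ :=
  ∑ k, (α k x : ℂ) * (-Complex.I * fderiv ℝ w x (Pi.single k 1))

/-- The divergence term `d_Y(x) = ∑ D_k α_k(x)`. -/
noncomputable def divR (n : ℕ) (α : Fin n → (Fin n → ℝ) → ℝ) (x : Fin n → ℝ) : ℂ :=
  ∑ k, -Complex.I * (fderiv ℝ (α k) x (Pi.single k 1) : ℂ)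

/-- Integration by parts base case: the integral of a partial derivative of a smooth
compactly supported function vanishes. -/
theorem integral_fderiv_eq_zero' {n : ℕ} (F : (Fin n → ℝ) → ℝ)
    (hF : ContDiff ℝ (⊤ : ℕ∞) F) (hFs : HasCompactSupport F) (v : Fin n → ℝ) :
    ∫ x, fderiv ℝ F x v = 0 := by
  obtain ⟨C, hC⟩ := hF.lipschitzWith_of_hasCompactSupport hFs (by simp)
  have h := LipschitzWith.integral_lineDeriv_mul_eq (μ := volume)
    (LipschitzWith.const (1:ℝ)) hC hFs v
  have h1 : ∀ x : Fin n → ℝ, lineDeriv ℝ (fun _ : Fin n → ℝ => (1:ℝ)) x v = 0 := by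
    intro x
    have : HasLineDerivAt ℝ (fun _ : Fin n → ℝ => (1:ℝ)) 0 x v := by
      simp [HasLineDerivAt, hasDerivAt_const]
    exact this.lineDeriv
  have h2 : ∀ x : Fin n → ℝ, lineDeriv ℝ F x (-v) = -fderiv ℝ F x v := by
    intro x
    rw [(hF.differentiable (by simp) x).lineDeriv_eq_fderiv]
    simp
  simp only [h1, zero_mul, integral_zero, h2, mul_one] at h
  have := h.symm
  rw [integral_neg] at this
  linarith [this]

/-- Algebraic computation of the imaginary part of the integrand. -/
theorem im_aux (r : ℝ) (m : ℕ) (a d : Fin m → ℝ) (p : Fin m → ℂ) (z : ℂ) :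
    ((r:ℂ) * ((∑ k, (a k:ℂ) * (-Complex.I * p k)) + (∑ k, -Complex.I * (d k:ℂ)) * z) *
        (starRingEnd ℂ) ((r:ℂ) * z)).im
      = r * r * (∑ k, (-(a k * (p k * (starRingEnd ℂ) z).re)
          - d k * (z.re * z.re + z.im * z.im))) := by
  rw [Finset.sum_mul, ← Finset.sum_add_distrib, Finset.mul_sum, Finset.sum_mul,
    Complex.im_sum, Finset.mul_sum]
  refine Finset.sum_congr rfl fun k _ => ?_
  simp [Complex.mul_im, Complex.mul_re, Complex.conj_re, Complex.conj_im]
  ring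

/-- if `Y` has real smooth coefficients, `g` is real smooth,
`K ⊆ Ω` is compact and `iYg = ∑ α_k ∂_k g ≥ c₀ > 0` on `K`, then for all
`λ > 0` and all `φ ∈ C_0^∞(K)`,
`Im (e^{λg} Y^* φ, e^{λg} φ) ≥ λ c₀ ‖e^{λg}φ‖² - (1/2)‖d_Y‖_{L^∞(K)} ‖e^{λg}φ‖²`,
where `Y^* φ = Y φ + d_Y φ`. -/
theorem stmt_3 (n : ℕ) (Ω : Set (Fin n → ℝ)) (hΩ : IsOpen Ω)
    (α : Fin n → (Fin n → ℝ) → ℝ) (hα : ∀ k, ContDiff ℝ (⊤ : ℕ∞) (α k))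
    (g : (Fin n → ℝ) → ℝ) (hg : ContDiff ℝ (⊤ : ℕ∞) g)
    (K : Set (Fin n → ℝ)) (hK : IsCompact K) (hKΩ : K ⊆ Ω)
    (c₀ : ℝ) (hc₀ : 0 < c₀)
    (hYg : ∀ x ∈ K, c₀ ≤ ∑ k, α k x * fderiv ℝ g x (Pi.single k 1))
    (lam : ℝ) (hlam : 0 < lam)
    (φ : (Fin n → ℝ) → ℂ) (hφ : ContDiff ℝ (⊤ : ℕ∞) φ)
    (hφs : HasCompactSupport φ) (hφK : tsupport φ ⊆ K) :
    (∫ x, (Real.exp (lam * g x) : ℂ) * (opR n α φ x + divR n α x * φ x) *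
        (starRingEnd ℂ) ((Real.exp (lam * g x) : ℂ) * φ x)).im ≥
      lam * c₀ * (∫ x, ‖(Real.exp (lam * g x) : ℂ) * φ x‖ ^ 2)
        - (1 / 2) * (sSup ((fun x => ‖divR n α x‖) '' K)) *
            (∫ x, ‖(Real.exp (lam * g x) : ℂ) * φ x‖ ^ 2) := by
  classical
  have hφd : Differentiable ℝ φ := hφ.differentiable (by simp)
  have hgd : Differentiable ℝ g := hg.differentiable (by simp)
  have hαd : ∀ k, Differentiable ℝ (α k) := fun k => (hα k).differentiable (by simp)
  set w : (Fin n → ℝ) → ℝ := fun x => (φ x).re * (φ x).re + (φ x).im * (φ x).im with hw_def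
  set Ex : (Fin n → ℝ) → ℝ := fun x => Real.exp (2 * lam * g x) with hEx_def
  set u : (Fin n → ℝ) → ℝ := fun x => Ex x * w x with hu_def
  set F : Fin n → (Fin n → ℝ) → ℝ := fun k x => α k x * (Ex x * w x) with hF_def
  set M : ℝ := sSup ((fun x => ‖divR n α x‖) '' K) with hM_def
  -- smoothness
  have hresm : ContDiff ℝ (⊤ : ℕ∞) (fun x => (φ x).re) := Complex.reCLM.contDiff.comp hφ
  have himsm : ContDiff ℝ (⊤ : ℕ∞) (fun x => (φ x).im) := Complex.imCLM.contDiff.comp hφ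
  have hwsm : ContDiff ℝ (⊤ : ℕ∞) w := (hresm.mul hresm).add (himsm.mul himsm)
  have hExsm : ContDiff ℝ (⊤ : ℕ∞) Ex := Real.contDiff_exp.comp (contDiff_const.mul hg)
  have hFsm : ∀ k, ContDiff ℝ (⊤ : ℕ∞) (F k) := fun k => (hα k).mul (hExsm.mul hwsm)
  -- supports
  have hwsupp : HasCompactSupport w := by
    apply HasCompactSupport.intro hφs
    intro x hx
    have : φ x = 0 := image_eq_zero_of_notMem_tsupport hx
    simp [hw_def, this]
  have husupp : HasCompactSupport u := hwsupp.mul_left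
  have hFsupp : ∀ k, HasCompactSupport (F k) := fun k => husupp.mul_left
  -- nonnegativity of u
  have hupos : ∀ x, 0 ≤ u x := fun x =>
    mul_nonneg (Real.exp_pos _).le (add_nonneg (mul_self_nonneg _) (mul_self_nonneg _))
  -- derivative of w
  have hwD : ∀ (x v : Fin n → ℝ), fderiv ℝ w x v
      = 2 * ((fderiv ℝ φ x v) * (starRingEnd ℂ) (φ x)).re := by
    intro x v
    have hd := (hφd x).hasFDerivAt
    have hre : HasFDerivAt (fun x => (φ x).re) (Complex.reCLM.comp (fderiv ℝ φ x)) x :=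
      (Complex.reCLM.hasFDerivAt).comp x hd
    have him : HasFDerivAt (fun x => (φ x).im) (Complex.imCLM.comp (fderiv ℝ φ x)) x :=
      (Complex.imCLM.hasFDerivAt).comp x hd
    have h := ((hre.fun_mul hre).fun_add (him.fun_mul him)).fderiv
    rw [hw_def, h]
    simp [Complex.mul_re]
    ring
  -- derivative of Ex
  have hExD : ∀ x : Fin n → ℝ, HasFDerivAt Ex (Ex x • ((2 * lam) • fderiv ℝ g x)) x := by
    intro x
    have h1 : HasFDerivAt (fun y => 2 * lam * g y) ((2 * lam) • fderiv ℝ g x) x :=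
      (hgd x).hasFDerivAt.const_mul _
    exact h1.exp
  have hExd : Differentiable ℝ Ex := hExsm.differentiable (by simp)
  have hwd : Differentiable ℝ w := hwsm.differentiable (by simp)
  -- derivative of F k
  have hFD : ∀ (k : Fin n) (x : Fin n → ℝ), fderiv ℝ (F k) x (Pi.single k 1)
      = fderiv ℝ (α k) x (Pi.single k 1) * (Ex x * w x)
        + α k x * (Ex x * (2 * ((fderiv ℝ φ x (Pi.single k 1)) * (starRingEnd ℂ) (φ x)).re)
            + w x * (Ex x * (2 * lam * fderiv ℝ g x (Pi.single k 1)))) := by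
    intro k x
    have h := (((hαd k x).hasFDerivAt).mul ((hExD x).mul (hwd x).hasFDerivAt)).fderiv
    have : fderiv ℝ (F k) x = α k x • (Ex x • fderiv ℝ w x + w x • (Ex x • ((2*lam) • fderiv ℝ g x)))
        + (Ex x * w x) • fderiv ℝ (α k) x := h
    rw [this]
    simp [ContinuousLinearMap.add_apply, ContinuousLinearMap.smul_apply, smul_eq_mul, hwD]
    ring
  -- pointwise identity for the imaginary part
  have key : ∀ x : Fin n → ℝ,
      ((Real.exp (lam * g x) : ℂ) * (opR n α φ x + divR n α x * φ x) *
        (starRingEnd ℂ) ((Real.exp (lam * g x) : ℂ) * φ x)).im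
      = (lam * (∑ k, α k x * fderiv ℝ g x (Pi.single k 1))
            - (1/2) * (∑ k, fderiv ℝ (α k) x (Pi.single k 1))) * u x
          - (1/2) * ∑ k, fderiv ℝ (F k) x (Pi.single k 1) := by
    intro x
    rw [opR, divR]
    rw [im_aux (Real.exp (lam * g x)) n (fun k => α k x)
      (fun k => fderiv ℝ (α k) x (Pi.single k 1)) (fun k => fderiv ℝ φ x (Pi.single k 1)) (φ x)]
    have hrr : Real.exp (lam * g x) * Real.exp (lam * g x) = Ex x := by
      rw [hEx_def, ← Real.exp_add]; ring_nf
    rw [hrr]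
    have expand : (lam * (∑ k, α k x * fderiv ℝ g x (Pi.single k 1))
            - (1/2) * (∑ k, fderiv ℝ (α k) x (Pi.single k 1))) * u x
          - (1/2) * ∑ k, fderiv ℝ (F k) x (Pi.single k 1)
        = ∑ k, ((lam * (α k x * fderiv ℝ g x (Pi.single k 1))
            - (1/2) * (fderiv ℝ (α k) x (Pi.single k 1))) * u x
          - (1/2) * fderiv ℝ (F k) x (Pi.single k 1)) := by
      rw [Finset.sum_sub_distrib, ← Finset.sum_mul, Finset.sum_sub_distrib,
        ← Finset.mul_sum, ← Finset.mul_sum, ← Finset.mul_sum]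
    rw [expand, Finset.mul_sum]
    refine Finset.sum_congr rfl fun k _ => ?_
    rw [hFD k x]
    simp only [hu_def, hw_def]
    ring
  -- continuity facts
  have hfφcont : Continuous fun x => fderiv ℝ φ x := hφ.continuous_fderiv (by simp)
  have hfgcont : Continuous fun x => fderiv ℝ g x := hg.continuous_fderiv (by simp)
  have hfαcont : ∀ k, Continuous fun x => fderiv ℝ (α k) x :=
    fun k => (hα k).continuous_fderiv (by simp)
  have hpcont : ∀ k : Fin n, Continuous fun x => fderiv ℝ φ x (Pi.single k 1) :=
    fun k => hfφcont.clm_apply continuous_const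
  have hdgcont : ∀ k : Fin n, Continuous fun x => fderiv ℝ g x (Pi.single k 1) :=
    fun k => hfgcont.clm_apply continuous_const
  have hdαcont : ∀ k : Fin n, Continuous fun x => fderiv ℝ (α k) x (Pi.single k 1) :=
    fun k => (hfαcont k).clm_apply continuous_const
  have hdivcont : Continuous fun x => divR n α x := by
    unfold divR
    exact continuous_finset_sum _ fun k _ =>
      continuous_const.mul ((Complex.continuous_ofReal.comp (hdαcont k)))
  have hE1cont : Continuous fun x => (Real.exp (lam * g x) : ℂ) :=
    Complex.continuous_ofReal.comp (Real.continuous_exp.comp (continuous_const.mul hg.continuous))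
  -- the integrand is integrable
  have hopcont : Continuous fun x => opR n α φ x := by
    unfold opR
    exact continuous_finset_sum _ fun k _ =>
      (Complex.continuous_ofReal.comp (hα k).continuous).mul
        (continuous_const.mul (hpcont k))
  have hIcont : Continuous fun x => (Real.exp (lam * g x) : ℂ) *
      (opR n α φ x + divR n α x * φ x) *
      (starRingEnd ℂ) ((Real.exp (lam * g x) : ℂ) * φ x) := by
    exact ((hE1cont.mul (hopcont.add (hdivcont.mul hφ.continuous))).mul
      (Complex.continuous_conj.comp (hE1cont.mul hφ.continuous)))
  have hIsupp : HasCompactSupport fun x => (Real.exp (lam * g x) : ℂ) *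
      (opR n α φ x + divR n α x * φ x) *
      (starRingEnd ℂ) ((Real.exp (lam * g x) : ℂ) * φ x) := by
    have h1 : HasCompactSupport fun x => (Real.exp (lam * g x) : ℂ) * φ x := hφs.mul_left
    have h2 : HasCompactSupport fun x =>
        (starRingEnd ℂ) ((Real.exp (lam * g x) : ℂ) * φ x) := h1.comp_left (map_zero _)
    exact h2.mul_left
  have hIint : Integrable (fun x => (Real.exp (lam * g x) : ℂ) *
      (opR n α φ x + divR n α x * φ x) *
      (starRingEnd ℂ) ((Real.exp (lam * g x) : ℂ) * φ x)) volume :=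
    hIcont.integrable_of_hasCompactSupport hIsupp
  -- pass `im` through the integral
  have him : (∫ x, (Real.exp (lam * g x) : ℂ) * (opR n α φ x + divR n α x * φ x) *
        (starRingEnd ℂ) ((Real.exp (lam * g x) : ℂ) * φ x)).im
      = ∫ x, ((Real.exp (lam * g x) : ℂ) * (opR n α φ x + divR n α x * φ x) *
        (starRingEnd ℂ) ((Real.exp (lam * g x) : ℂ) * φ x)).im := by
    have h := (ContinuousLinearMap.integral_comp_comm Complex.imCLM hIint).symm
    simpa using h
  -- define H
  set H : (Fin n → ℝ) → ℝ := fun x => (lam * (∑ k, α k x * fderiv ℝ g x (Pi.single k 1))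
      - (1/2) * (∑ k, fderiv ℝ (α k) x (Pi.single k 1))) * u x with hH_def
  -- integrability of the pieces
  have hucont : Continuous u := hExsm.continuous.mul hwsm.continuous
  have huint : Integrable u volume := hucont.integrable_of_hasCompactSupport husupp
  have hHcont : Continuous H := by
    apply Continuous.mul ?_ hucont
    exact ((continuous_const.mul (continuous_finset_sum _ fun k _ =>
      ((hα k).continuous.mul (hdgcont k)))).sub
      (continuous_const.mul (continuous_finset_sum _ fun k _ => hdαcont k)))
  have hHsupp : HasCompactSupport H := husupp.mul_left
  have hHint : Integrable H volume := hHcont.integrable_of_hasCompactSupport hHsupp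
  have hDFcont : ∀ k : Fin n, Continuous fun x => fderiv ℝ (F k) x (Pi.single k 1) :=
    fun k => ((hFsm k).continuous_fderiv (by simp)).clm_apply continuous_const
  have hDFsupp : ∀ k : Fin n, HasCompactSupport fun x => fderiv ℝ (F k) x (Pi.single k 1) :=
    fun k => (hFsupp k).fderiv_apply ℝ (Pi.single k 1)
  have hDFint : ∀ k : Fin n, Integrable (fun x => fderiv ℝ (F k) x (Pi.single k 1)) volume :=
    fun k => (hDFcont k).integrable_of_hasCompactSupport (hDFsupp k)
  have hDFzero : ∀ k : Fin n, ∫ x, fderiv ℝ (F k) x (Pi.single k 1) = 0 :=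
    fun k => integral_fderiv_eq_zero' (F k) (hFsm k) (hFsupp k) (Pi.single k 1)
  -- compute the integral of the imaginary part
  have hsplit : ∫ x, ((Real.exp (lam * g x) : ℂ) * (opR n α φ x + divR n α x * φ x) *
        (starRingEnd ℂ) ((Real.exp (lam * g x) : ℂ) * φ x)).im
      = ∫ x, H x := by
    have : ∀ x : Fin n → ℝ, ((Real.exp (lam * g x) : ℂ) * (opR n α φ x + divR n α x * φ x) *
        (starRingEnd ℂ) ((Real.exp (lam * g x) : ℂ) * φ x)).im
        = H x - (1/2) * ∑ k, fderiv ℝ (F k) x (Pi.single k 1) := fun x => key x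
    rw [integral_congr_ae (Filter.Eventually.of_forall this)]
    rw [integral_sub hHint (by
      exact (integrable_finset_sum _ fun k _ => hDFint k).const_mul _)]
    rw [integral_const_mul, integral_finset_sum _ fun k _ => hDFint k]
    simp [hDFzero]
  -- lower bound for H
  have hMb : ∀ x ∈ K, ∑ k, fderiv ℝ (α k) x (Pi.single k 1) ≤ M := by
    intro x hx
    have hnorm : ‖divR n α x‖ = |∑ k, fderiv ℝ (α k) x (Pi.single k 1)| := by
      unfold divR
      rw [← Finset.mul_sum, ← Complex.ofReal_sum, norm_mul, norm_neg, Complex.norm_I, one_mul,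
        Complex.norm_real, Real.norm_eq_abs]
    have hbdd : BddAbove ((fun x => ‖divR n α x‖) '' K) :=
      (hK.image hdivcont.norm).bddAbove
    have := le_csSup hbdd (Set.mem_image_of_mem _ hx)
    rw [hnorm] at this
    exact le_trans (le_abs_self _) this
  have hptwise : ∀ x : Fin n → ℝ, (lam * c₀ - (1/2) * M) * u x ≤ H x := by
    intro x
    by_cases hx : x ∈ tsupport φ
    · have hxK : x ∈ K := hφK hx
      apply mul_le_mul_of_nonneg_right _ (hupos x)
      have h1 : lam * c₀ ≤ lam * (∑ k, α k x * fderiv ℝ g x (Pi.single k 1)) :=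
        mul_le_mul_of_nonneg_left (hYg x hxK) hlam.le
      have h2 : (∑ k, fderiv ℝ (α k) x (Pi.single k 1)) ≤ M := hMb x hxK
      nlinarith
    · have hϕ0 : φ x = 0 := image_eq_zero_of_notMem_tsupport hx
      have hu0 : u x = 0 := by simp [hu_def, hw_def, hϕ0]
      rw [hH_def]
      simp [hu0]
  have hconstint : Integrable (fun x => (lam * c₀ - (1/2) * M) * u x) volume :=
    huint.const_mul _
  have hmono : (lam * c₀ - (1/2) * M) * ∫ x, u x ≤ ∫ x, H x := by
    rw [← integral_const_mul]
    exact integral_mono hconstint hHint hptwise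
  -- rewrite the norm integrand in the goal
  have hnormu : ∀ x : Fin n → ℝ, ‖(Real.exp (lam * g x) : ℂ) * φ x‖ ^ 2 = u x := by
    intro x
    rw [norm_mul, mul_pow, Complex.norm_real, Real.norm_eq_abs, abs_of_pos (Real.exp_pos _),
      hu_def]
    have h2 : ‖φ x‖ ^ 2 = w x := by
      simp only [hw_def, ← Complex.normSq_apply, Complex.normSq_eq_norm_sq]
    rw [h2, hEx_def, sq, ← Real.exp_add]
    ring_nf
  have hieq : (∫ x, ‖(Real.exp (lam * g x) : ℂ) * φ x‖ ^ 2) = ∫ x, u x :=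
    integral_congr_ae (Filter.Eventually.of_forall hnormu)
  rw [ge_iff_le, him, hsplit, hieq]
  calc lam * c₀ * (∫ x, u x) - 1 / 2 * M * (∫ x, u x)
      = (lam * c₀ - (1/2) * M) * ∫ x, u x := by ring
    _ ≤ ∫ x, H x := hmono
end

section
/- Let X_{N+1} and X₀ = -B be first-order homogeneous differential operators with real smooth coefficients on Ω, with purely imaginary divergence terms d_{X_{N+1}}, d_{X₀}. Then for every compact K ⊂ Ω, all δ₀, δ₁, δ₂ > 0, and all u ∈ C_0^∞(K): 2 Re ((X*_{N+1} − iX*₀)u, iBu)_{L²} ≥ −(1/(2δ₀))‖d_{X_{N+1}}‖²_{L^∞(K)}‖u‖₀² − (δ₀/2)‖X₀u‖₀² − (1/(2δ₁))‖u‖₀² − (δ₁/2)‖[X_{N+1},X₀]u‖₀² − Re((Im d_{X₀}) X_{N+1}u, u)_{L²} − (1/δ₂)‖d_{X₀}‖²_{L^∞(K)}‖u‖₀² − δ₂‖X₀u‖₀² + 2‖X₀u‖₀². -/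
open MeasureTheory

section Aux
open Complex
variable {n : ℕ}

lemma intg_fd_real (f : (Fin n → ℝ) → ℝ) (hf : ContDiff ℝ (⊤ : ℕ∞) f)
    (hs : HasCompactSupport f) (v : Fin n → ℝ) :
    ∫ x, fderiv ℝ f x v = 0 := by
  obtain ⟨C, hC⟩ := hf.lipschitzWith_of_hasCompactSupport hs (by simp)
  have h := LipschitzWith.integral_lineDeriv_mul_eq (μ := volume)
    (LipschitzWith.const (b := (1:ℝ))) hC hs v
  have h1 : ∀ x : Fin n → ℝ, lineDeriv ℝ (fun _ => (1:ℝ)) x v = 0 := by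
    intro x
    rw [(differentiableAt_const (1:ℝ)).lineDeriv_eq_fderiv]
    simp
  have h2 : ∀ x, lineDeriv ℝ f x (-v) * (1:ℝ) = -(fderiv ℝ f x v) := by
    intro x
    rw [mul_one, (hf.differentiable (by simp) x).lineDeriv_eq_fderiv, map_neg]
  simp only [h1, h2, zero_mul, integral_zero, integral_neg] at h
  linarith
variable {n : ℕ}

lemma fd_app_contDiff {F : Type*} [NormedAddCommGroup F] [NormedSpace ℝ F]
    {f : (Fin n → ℝ) → F} (hf : ContDiff ℝ (⊤ : ℕ∞) f) (v : Fin n → ℝ) :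
    ContDiff ℝ (⊤ : ℕ∞) (fun x => fderiv ℝ f x v) :=
  (hf.fderiv_right (by simp)).clm_apply contDiff_const

lemma hcs_of_support_subset {F : Type*} [NormedAddCommGroup F]
    {u : (Fin n → ℝ) → ℂ} (hus : HasCompactSupport u)
    {φ : (Fin n → ℝ) → F} (h : ∀ x, x ∉ tsupport u → φ x = 0) :
    HasCompactSupport φ := by
  apply IsCompact.of_isClosed_subset hus (isClosed_tsupport φ)
  apply closure_minimal _ (isClosed_tsupport u)
  intro x hx
  by_contra hxt
  exact hx (h x hxt)

lemma intg_fd_cx (f : (Fin n → ℝ) → ℂ) (hf : ContDiff ℝ (⊤ : ℕ∞) f)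
    (hs : HasCompactSupport f) (v : Fin n → ℝ) :
    ∫ x, fderiv ℝ f x v = (0:ℂ) := by
  have hint : Integrable (fun x => fderiv ℝ f x v) := by
    apply Continuous.integrable_of_hasCompactSupport (fd_app_contDiff hf v).continuous
    apply hcs_of_support_subset hs
    intro x hx
    have : fderiv ℝ f x = 0 := by
      have := support_fderiv_subset (𝕜 := ℝ) (f := f)
      by_contra h0
      exact hx (this h0)
    simp [this]
  have hre : ∀ x, fderiv ℝ (fun y => (f y).re) x v = (fderiv ℝ f x v).re := by
    intro x
    have h : HasFDerivAt (fun y => (f y).re) (Complex.reCLM.comp (fderiv ℝ f x)) x :=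
      Complex.reCLM.hasFDerivAt.comp x (hf.differentiable (by simp) x).hasFDerivAt
    rw [h.fderiv]; rfl
  have him : ∀ x, fderiv ℝ (fun y => (f y).im) x v = (fderiv ℝ f x v).im := by
    intro x
    have h : HasFDerivAt (fun y => (f y).im) (Complex.imCLM.comp (fderiv ℝ f x)) x :=
      Complex.imCLM.hasFDerivAt.comp x (hf.differentiable (by simp) x).hasFDerivAt
    rw [h.fderiv]; rfl
  have hR := integral_re hint
  have hI := integral_im hint
  simp only [RCLike.re_to_complex, RCLike.im_to_complex] at hR hI
  apply Complex.ext
  · rw [← hR, show (0:ℂ).re = 0 from rfl, ← intg_fd_real (fun y => (f y).re)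
      (Complex.reCLM.contDiff.comp hf) (hs.comp_left (g := Complex.re) rfl) v]
    exact integral_congr_ae (Filter.Eventually.of_forall fun x => (hre x).symm)
  · rw [← hI, show (0:ℂ).im = 0 from rfl, ← intg_fd_real (fun y => (f y).im)
      (Complex.imCLM.contDiff.comp hf) (hs.comp_left (g := Complex.im) rfl) v]
    exact integral_congr_ae (Filter.Eventually.of_forall fun x => (him x).symm)


lemma ibp_single (α : (Fin n → ℝ) → ℝ) (hα : ContDiff ℝ (⊤ : ℕ∞) α)
    (f g : (Fin n → ℝ) → ℂ) (hf : ContDiff ℝ (⊤ : ℕ∞) f) (hg : ContDiff ℝ (⊤ : ℕ∞) g)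
    (hfs : HasCompactSupport f) (v : Fin n → ℝ) :
    ∫ x, (α x : ℂ) * (-Complex.I * fderiv ℝ f x v) * starRingEnd ℂ (g x)
      = (∫ x, f x * starRingEnd ℂ ((α x : ℂ) * (-Complex.I * fderiv ℝ g x v)))
        + ∫ x, f x * starRingEnd ℂ (-Complex.I * (fderiv ℝ α x v : ℂ) * g x) := by
  have hconj : ContDiff ℝ (⊤ : ℕ∞) (fun x => star (g x)) :=
    (((starL' ℝ : ℂ ≃L[ℝ] ℂ) : ℂ →L[ℝ] ℂ).contDiff).comp hg
  set A : (Fin n → ℝ) → ℂ := fun x => (fderiv ℝ α x v : ℂ) * (f x * star (g x)) with hA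
  set B : (Fin n → ℝ) → ℂ := fun x => (α x : ℂ) * (fderiv ℝ f x v * star (g x)) with hB
  set C : (Fin n → ℝ) → ℂ := fun x => (α x : ℂ) * (f x * star (fderiv ℝ g x v)) with hC
  set F : (Fin n → ℝ) → ℂ := fun x => (α x : ℂ) * (f x * star (g x)) with hF
  have hFc : ContDiff ℝ (⊤ : ℕ∞) F :=
    ((Complex.ofRealCLM.contDiff).comp hα).mul (hf.mul hconj)
  have hFs : HasCompactSupport F := by
    apply hcs_of_support_subset hfs
    intro x hx
    have : f x = 0 := image_eq_zero_of_notMem_tsupport hx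
    simp [hF, this]
  have hfd : ∀ x, fderiv ℝ F x v = A x + B x + C x := by
    intro x
    have hαx : HasFDerivAt (fun y => ((α y : ℝ) : ℂ))
        (Complex.ofRealCLM.comp (fderiv ℝ α x)) x :=
      Complex.ofRealCLM.hasFDerivAt.comp x (hα.differentiable (by simp) x).hasFDerivAt
    have hgx : HasFDerivAt (fun y => star (g y))
        (((starL' ℝ : ℂ ≃L[ℝ] ℂ) : ℂ →L[ℝ] ℂ) ∘L (fderiv ℝ g x)) x :=
      (hg.differentiable (by simp) x).hasFDerivAt.star
    have h1 := ((hf.differentiable (by simp) x).hasFDerivAt).fun_mul hgx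
    have h2 := hαx.fun_mul h1
    rw [h2.fderiv]
    simp only [ContinuousLinearMap.add_apply, ContinuousLinearMap.smul_apply,
      ContinuousLinearMap.comp_apply, ContinuousLinearMap.coe_comp', Function.comp_apply,
      smul_eq_mul, Complex.ofRealCLM_apply, ContinuousLinearEquiv.coe_coe]
    have hst : ∀ z : ℂ, (starL' ℝ : ℂ ≃L[ℝ] ℂ) z = star z := fun _ => rfl
    simp only [hst, hA, hB, hC]
    ring
  have hint : ∀ (φ : (Fin n → ℝ) → ℂ), Continuous φ → (∀ x, x ∉ tsupport f → φ x = 0) →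
      Integrable φ := by
    intro φ hc h0
    exact hc.integrable_of_hasCompactSupport (hcs_of_support_subset hfs h0)
  have hfz : ∀ x, x ∉ tsupport f → f x = 0 := fun x hx => image_eq_zero_of_notMem_tsupport hx
  have hdfz : ∀ x, x ∉ tsupport f → fderiv ℝ f x = 0 := by
    intro x hx
    by_contra h0
    exact hx (support_fderiv_subset (𝕜 := ℝ) (Function.mem_support.2 h0))
  have hconjc : Continuous (fun x => star (g x)) := hconj.continuous
  have hiA : Integrable A := by
    refine hint _ (((Complex.continuous_ofReal.comp (fd_app_contDiff hα v).continuous)).mul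
      (hf.continuous.mul hconjc)) (fun x hx => by simp [hA, hfz x hx])
  have hiB : Integrable B := by
    refine hint _ ((Complex.continuous_ofReal.comp hα.continuous).mul
      (((fd_app_contDiff hf v).continuous).mul hconjc)) (fun x hx => by simp [hB, hdfz x hx])
  have hiC : Integrable C := by
    refine hint _ ((Complex.continuous_ofReal.comp hα.continuous).mul
      (hf.continuous.mul (continuous_star.comp (fd_app_contDiff hg v).continuous)))
      (fun x hx => by simp [hC, hfz x hx])
  have hsum : (∫ x, A x) + (∫ x, B x) + (∫ x, C x) = 0 := by
    have h0 : ∫ x, (A x + B x + C x) = 0 := by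
      rw [← intg_fd_cx F hFc hFs v]
      exact integral_congr_ae (Filter.Eventually.of_forall fun x => ((hfd x).symm))
    have hAB : Integrable (fun x => A x + B x) volume := hiA.add hiB
    rw [integral_add hAB hiC, integral_add hiA hiB] at h0
    linear_combination h0
  have e1 : ∫ x, (α x : ℂ) * (-Complex.I * fderiv ℝ f x v) * starRingEnd ℂ (g x)
      = -Complex.I * ∫ x, B x := by
    rw [← integral_const_mul]
    exact integral_congr_ae (Filter.Eventually.of_forall fun x => by
      simp only [hB, starRingEnd_apply]; ring)
  have e2 : (∫ x, f x * starRingEnd ℂ ((α x : ℂ) * (-Complex.I * fderiv ℝ g x v)))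
      = Complex.I * ∫ x, C x := by
    rw [← integral_const_mul]
    refine integral_congr_ae (Filter.Eventually.of_forall fun x => ?_)
    simp only [hC, Complex.star_def, map_mul, map_neg, Complex.conj_I, Complex.conj_ofReal]
    ring
  have e3 : (∫ x, f x * starRingEnd ℂ (-Complex.I * (fderiv ℝ α x v : ℂ) * g x))
      = Complex.I * ∫ x, A x := by
    rw [← integral_const_mul]
    refine integral_congr_ae (Filter.Eventually.of_forall fun x => ?_)
    simp only [hA, Complex.star_def, map_mul, map_neg, Complex.conj_I, Complex.conj_ofReal]
    ring
  rw [e1, e2, e3]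
  linear_combination (-Complex.I) * hsum


lemma opR_contDiff {α : Fin n → (Fin n → ℝ) → ℝ} (hα : ∀ k, ContDiff ℝ (⊤ : ℕ∞) (α k))
    {f : (Fin n → ℝ) → ℂ} (hf : ContDiff ℝ (⊤ : ℕ∞) f) : ContDiff ℝ (⊤ : ℕ∞) (opR n α f) := by
  unfold opR
  apply ContDiff.sum
  intro k _
  exact ((Complex.ofRealCLM.contDiff).comp (hα k)).mul
    (contDiff_const.mul (fd_app_contDiff hf _))

lemma divR_contDiff {α : Fin n → (Fin n → ℝ) → ℝ} (hα : ∀ k, ContDiff ℝ (⊤ : ℕ∞) (α k)) :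
    ContDiff ℝ (⊤ : ℕ∞) (divR n α) := by
  unfold divR
  apply ContDiff.sum
  intro k _
  exact contDiff_const.mul ((Complex.ofRealCLM.contDiff).comp (fd_app_contDiff (hα k) _))

lemma opR_eq_zero {α : Fin n → (Fin n → ℝ) → ℝ} {f : (Fin n → ℝ) → ℂ} {x : Fin n → ℝ}
    (hx : x ∉ tsupport f) : opR n α f x = 0 := by
  have h : fderiv ℝ f x = 0 := by
    by_contra h0
    exact hx (support_fderiv_subset (𝕜 := ℝ) (Function.mem_support.2 h0))
  simp [opR, h]

lemma divR_conj {α : Fin n → (Fin n → ℝ) → ℝ} (x : Fin n → ℝ) :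
    starRingEnd ℂ (divR n α x) = -divR n α x := by
  simp only [divR, map_sum, map_mul, map_neg, Complex.conj_I, Complex.conj_ofReal,
    ← Finset.sum_neg_distrib]
  exact Finset.sum_congr rfl fun k _ => by ring

lemma divR_re {α : Fin n → (Fin n → ℝ) → ℝ} (x : Fin n → ℝ) :
    (divR n α x).re = 0 := by
  simp [divR, Complex.re_sum]

lemma ibp_opR (α : Fin n → (Fin n → ℝ) → ℝ) (hα : ∀ k, ContDiff ℝ (⊤ : ℕ∞) (α k))
    (f g : (Fin n → ℝ) → ℂ) (hf : ContDiff ℝ (⊤ : ℕ∞) f) (hg : ContDiff ℝ (⊤ : ℕ∞) g)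
    (hfs : HasCompactSupport f) :
    ∫ x, opR n α f x * starRingEnd ℂ (g x)
      = (∫ x, f x * starRingEnd ℂ (opR n α g x))
        + ∫ x, f x * starRingEnd ℂ (divR n α x * g x) := by
  have hfz : ∀ x, x ∉ tsupport f → f x = 0 := fun x hx => image_eq_zero_of_notMem_tsupport hx
  have hdfz : ∀ x, x ∉ tsupport f → fderiv ℝ f x = 0 := by
    intro x hx
    by_contra h0
    exact hx (support_fderiv_subset (𝕜 := ℝ) (Function.mem_support.2 h0))
  have hint : ∀ (φ : (Fin n → ℝ) → ℂ), Continuous φ → (∀ x, x ∉ tsupport f → φ x = 0) →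
      Integrable φ := fun φ hc h0 =>
    hc.integrable_of_hasCompactSupport (hcs_of_support_subset hfs h0)
  have hL : ∫ x, opR n α f x * starRingEnd ℂ (g x)
      = ∑ k, ∫ x, (α k x : ℂ) * (-Complex.I * fderiv ℝ f x (Pi.single k 1))
          * starRingEnd ℂ (g x) := by
    rw [← integral_finset_sum]
    · exact integral_congr_ae (Filter.Eventually.of_forall fun x => by
        simp [opR, Finset.sum_mul])
    · intro k _
      refine hint _ ?_ (fun x hx => by simp [hdfz x hx])
      exact ((Complex.continuous_ofReal.comp (hα k).continuous).mul
        (continuous_const.mul (fd_app_contDiff hf _).continuous)).mul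
        (continuous_star.comp hg.continuous)
  have hR1 : ∫ x, f x * starRingEnd ℂ (opR n α g x)
      = ∑ k, ∫ x, f x * starRingEnd ℂ ((α k x : ℂ)
          * (-Complex.I * fderiv ℝ g x (Pi.single k 1))) := by
    rw [← integral_finset_sum]
    · exact integral_congr_ae (Filter.Eventually.of_forall fun x => by
        simp [opR, map_sum, Finset.mul_sum])
    · intro k _
      refine hint _ ?_ (fun x hx => by simp [hfz x hx])
      exact hf.continuous.mul (continuous_star.comp
        ((Complex.continuous_ofReal.comp (hα k).continuous).mul
          (continuous_const.mul (fd_app_contDiff hg _).continuous)))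
  have hR2 : ∫ x, f x * starRingEnd ℂ (divR n α x * g x)
      = ∑ k, ∫ x, f x * starRingEnd ℂ (-Complex.I
          * (fderiv ℝ (α k) x (Pi.single k 1) : ℂ) * g x) := by
    rw [← integral_finset_sum]
    · refine integral_congr_ae (Filter.Eventually.of_forall fun x => ?_)
      simp only [divR, Finset.sum_mul, map_sum, Finset.mul_sum]
    · intro k _
      refine hint _ ?_ (fun x hx => by simp [hfz x hx])
      exact hf.continuous.mul (continuous_star.comp
        ((continuous_const.mul (Complex.continuous_ofReal.comp
          (fd_app_contDiff (hα k) _).continuous)).mul hg.continuous))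
  rw [hL, hR1, hR2, ← Finset.sum_add_distrib]
  exact Finset.sum_congr rfl fun k _ =>
    ibp_single (α k) (hα k) f g hf hg hfs (Pi.single k 1)


lemma pt_bound (δ : ℝ) (hδ : 0 < δ) (c z w : ℂ) (hc : ‖c‖ ≤ 1) :
    -((1/(2*δ)) * ‖z‖^2 + (δ/2) * ‖w‖^2) ≤ (c * (z * starRingEnd ℂ w)).re := by
  have h1 : |(c * (z * starRingEnd ℂ w)).re| ≤ ‖z‖ * ‖w‖ := by
    refine (Complex.abs_re_le_norm _).trans ?_
    rw [norm_mul, norm_mul, RCLike.norm_conj]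
    nlinarith [norm_nonneg z, norm_nonneg w, norm_nonneg c,
      mul_nonneg (norm_nonneg z) (norm_nonneg w)]
  have h2 := (abs_le.1 h1).1
  have key : ‖z‖ * ‖w‖ ≤ (1/(2*δ)) * ‖z‖^2 + (δ/2) * ‖w‖^2 := by
    rw [← sub_nonneg]
    have heq : (1/(2*δ)) * ‖z‖^2 + (δ/2) * ‖w‖^2 - ‖z‖ * ‖w‖
        = (1/(2*δ)) * (‖z‖ - δ * ‖w‖)^2 := by
      field_simp
      ring
    rw [heq]
    positivity
  linarith

lemma pt_bound' (δ : ℝ) (hδ : 0 < δ) (z w : ℂ) :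
    -((1/(2*δ)) * ‖z‖^2 + (δ/2) * ‖w‖^2) ≤ (z * starRingEnd ℂ w).re := by
  have := pt_bound δ hδ 1 z w (by norm_num)
  simpa using this

lemma two_re_I_mul (w : ℂ) : 2 * (Complex.I * w).re = (Complex.I * (w - starRingEnd ℂ w)).re := by
  simp [Complex.mul_re, Complex.sub_re, Complex.sub_im]
  ring

lemma re_real_mul_conj_comm (r : ℝ) (z w : ℂ) :
    ((r : ℂ) * z * starRingEnd ℂ w).re = ((r : ℂ) * w * starRingEnd ℂ z).re := by
  simp [Complex.mul_re, Complex.mul_im]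
  ring

lemma mul_conj_re_eq_normsq (z : ℂ) : (z * starRingEnd ℂ z).re = ‖z‖^2 := by
  rw [Complex.mul_conj, Complex.ofReal_re, Complex.normSq_eq_norm_sq]

lemma divR_eq_im_mul_I {n : ℕ} {α : Fin n → (Fin n → ℝ) → ℝ} (x : Fin n → ℝ) :
    divR n α x = ((divR n α x).im : ℂ) * Complex.I := by
  apply Complex.ext
  · rw [divR_re]
    simp [Complex.mul_re]
  · simp [Complex.mul_im]


end Aux

/-- for `X_{N+1}` (coefficients `a`) and `X₀` (coefficients `b`)
first-order homogeneous operators with real smooth coefficients, `B = -X₀`,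
every compact `K ⊆ Ω`, all `δ₀,δ₁,δ₂ > 0` and all `u ∈ C_0^∞(K)`:
`2Re((X*_{N+1} − iX*₀)u, iBu) ≥ −(1/2δ₀)‖d_{X_{N+1}}‖²_{∞,K}‖u‖² − (δ₀/2)‖X₀u‖²
− (1/2δ₁)‖u‖² − (δ₁/2)‖[X_{N+1},X₀]u‖² − Re((Im d_{X₀})X_{N+1}u, u)
− (1/δ₂)‖d_{X₀}‖²_{∞,K}‖u‖² − δ₂‖X₀u‖² + 2‖X₀u‖²`. -/
theorem stmt_16 (n : ℕ) (Ω : Set (Fin n → ℝ)) (hΩ : IsOpen Ω)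
    (a b : Fin n → (Fin n → ℝ) → ℝ)
    (ha : ∀ k, ContDiff ℝ (⊤ : ℕ∞) (a k)) (hb : ∀ k, ContDiff ℝ (⊤ : ℕ∞) (b k))
    (K : Set (Fin n → ℝ)) (hK : IsCompact K) (hKΩ : K ⊆ Ω)
    (δ₀ δ₁ δ₂ : ℝ) (hδ₀ : 0 < δ₀) (hδ₁ : 0 < δ₁) (hδ₂ : 0 < δ₂)
    (u : (Fin n → ℝ) → ℂ) (hu : ContDiff ℝ (⊤ : ℕ∞) u)
    (hus : HasCompactSupport u) (huK : tsupport u ⊆ K) :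
    2 * (∫ x, ((opR n a u x + divR n a x * u x)
          - Complex.I * (opR n b u x + divR n b x * u x)) *
        (starRingEnd ℂ) (Complex.I * (-(opR n b u x)))).re ≥
      -(1 / (2 * δ₀)) * (sSup ((fun x => ‖divR n a x‖) '' K)) ^ 2 * (∫ x, ‖u x‖ ^ 2)
      - (δ₀ / 2) * (∫ x, ‖opR n b u x‖ ^ 2)
      - (1 / (2 * δ₁)) * (∫ x, ‖u x‖ ^ 2)
      - (δ₁ / 2) * (∫ x, ‖opR n a (fun y => opR n b u y) x
                          - opR n b (fun y => opR n a u y) x‖ ^ 2)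
      - (∫ x, (((divR n b x).im : ℂ)) * opR n a u x * (starRingEnd ℂ) (u x)).re
      - (1 / δ₂) * (sSup ((fun x => ‖divR n b x‖) '' K)) ^ 2 * (∫ x, ‖u x‖ ^ 2)
      - δ₂ * (∫ x, ‖opR n b u x‖ ^ 2)
      + 2 * (∫ x, ‖opR n b u x‖ ^ 2) := by
  show
    2 * (∫ x, ((opR n a u x + divR n a x * u x)
          - Complex.I * (opR n b u x + divR n b x * u x)) *
        (starRingEnd ℂ) (Complex.I * (-(opR n b u x)))).re ≥
      -(1 / (2 * δ₀)) * (sSup ((fun x => ‖divR n a x‖) '' K)) ^ 2 * (∫ x, ‖u x‖ ^ 2)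
      - (δ₀ / 2) * (∫ x, ‖opR n b u x‖ ^ 2)
      - (1 / (2 * δ₁)) * (∫ x, ‖u x‖ ^ 2)
      - (δ₁ / 2) * (∫ x, ‖opR n a (opR n b u) x - opR n b (opR n a u) x‖ ^ 2)
      - (∫ x, (((divR n b x).im : ℂ)) * opR n a u x * (starRingEnd ℂ) (u x)).re
      - (1 / δ₂) * (sSup ((fun x => ‖divR n b x‖) '' K)) ^ 2 * (∫ x, ‖u x‖ ^ 2)
      - δ₂ * (∫ x, ‖opR n b u x‖ ^ 2)
      + 2 * (∫ x, ‖opR n b u x‖ ^ 2)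
  -- smoothness
  have hA : ContDiff ℝ (⊤ : ℕ∞) (opR n a u) := opR_contDiff ha hu
  have hBo : ContDiff ℝ (⊤ : ℕ∞) (opR n b u) := opR_contDiff hb hu
  have haBo : ContDiff ℝ (⊤ : ℕ∞) (opR n a (opR n b u)) := opR_contDiff ha hBo
  have hbA : ContDiff ℝ (⊤ : ℕ∞) (opR n b (opR n a u)) := opR_contDiff hb hA
  have hdA : ContDiff ℝ (⊤ : ℕ∞) (divR n a) := divR_contDiff ha
  have hdB : ContDiff ℝ (⊤ : ℕ∞) (divR n b) := divR_contDiff hb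
  have hcu := hu.continuous
  have hcA := hA.continuous
  have hcBo := hBo.continuous
  have hcdA := hdA.continuous
  have hcdB := hdB.continuous
  have hcC : Continuous (fun x => opR n a (opR n b u) x - opR n b (opR n a u) x) :=
    haBo.continuous.sub hbA.continuous
  -- vanishing off tsupport u
  have hzu : ∀ x, x ∉ tsupport u → u x = 0 := fun x hx => image_eq_zero_of_notMem_tsupport hx
  have hzA : ∀ x, x ∉ tsupport u → opR n a u x = 0 := fun x hx => opR_eq_zero hx
  have hzBo : ∀ x, x ∉ tsupport u → opR n b u x = 0 := fun x hx => opR_eq_zero hx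
  have htBo : tsupport (opR n b u) ⊆ tsupport u :=
    closure_minimal (fun x hx => by
      by_contra h
      exact hx (opR_eq_zero h)) (isClosed_tsupport u)
  have htA : tsupport (opR n a u) ⊆ tsupport u :=
    closure_minimal (fun x hx => by
      by_contra h
      exact hx (opR_eq_zero h)) (isClosed_tsupport u)
  have hzaBo : ∀ x, x ∉ tsupport u → opR n a (opR n b u) x = 0 :=
    fun x hx => opR_eq_zero (fun h => hx (htBo h))
  have hzbA : ∀ x, x ∉ tsupport u → opR n b (opR n a u) x = 0 :=
    fun x hx => opR_eq_zero (fun h => hx (htA h))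
  -- integrability helpers
  have hintC : ∀ (φ : (Fin n → ℝ) → ℂ), Continuous φ → (∀ x, x ∉ tsupport u → φ x = 0) →
      Integrable φ := fun φ hc h0 =>
    hc.integrable_of_hasCompactSupport (hcs_of_support_subset hus h0)
  have hintR : ∀ (φ : (Fin n → ℝ) → ℝ), Continuous φ → (∀ x, x ∉ tsupport u → φ x = 0) →
      Integrable φ := fun φ hc h0 =>
    hc.integrable_of_hasCompactSupport (hcs_of_support_subset hus h0)
  have hre_int : ∀ (φ : (Fin n → ℝ) → ℂ), Integrable φ →
      (∫ x, (φ x).re) = (∫ x, φ x).re := fun φ h => by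
    simpa [RCLike.re_to_complex] using integral_re h
  -- real integrands
  have hiu2 : Integrable (fun x => ‖u x‖ ^ 2) :=
    hintR _ ((hcu.norm).pow 2) (fun x hx => by simp [hzu x hx])
  have hiBo2 : Integrable (fun x => ‖opR n b u x‖ ^ 2) :=
    hintR _ ((hcBo.norm).pow 2) (fun x hx => by simp [hzBo x hx])
  have hiC2 : Integrable (fun x => ‖opR n a (opR n b u) x - opR n b (opR n a u) x‖ ^ 2) :=
    hintR _ ((hcC.norm).pow 2) (fun x hx => by simp [hzaBo x hx, hzbA x hx])
  -- complex integrands for the splitting of the LHS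
  have hic1 : Integrable (fun x => Complex.I * (opR n a u x * starRingEnd ℂ (opR n b u x))) :=
    hintC _ (continuous_const.mul (hcA.mul (continuous_star.comp hcBo)))
      (fun x hx => by simp [hzA x hx])
  have hic2 : Integrable (fun x => Complex.I *
      (divR n a x * u x * starRingEnd ℂ (opR n b u x))) :=
    hintC _ (continuous_const.mul ((hcdA.mul hcu).mul (continuous_star.comp hcBo)))
      (fun x hx => by simp [hzu x hx])
  have hic3 : Integrable (fun x => opR n b u x * starRingEnd ℂ (opR n b u x)) :=
    hintC _ (hcBo.mul (continuous_star.comp hcBo)) (fun x hx => by simp [hzBo x hx])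
  have hic4 : Integrable (fun x => divR n b x * u x * starRingEnd ℂ (opR n b u x)) :=
    hintC _ ((hcdB.mul hcu).mul (continuous_star.comp hcBo)) (fun x hx => by simp [hzu x hx])
  have hik1 : Integrable (fun x => u x *
      starRingEnd ℂ (opR n a (opR n b u) x - opR n b (opR n a u) x)) :=
    hintC _ (hcu.mul (continuous_star.comp hcC)) (fun x hx => by simp [hzu x hx])
  have hik1a : Integrable (fun x => u x * starRingEnd ℂ (opR n a (opR n b u) x)) :=
    hintC _ (hcu.mul (continuous_star.comp haBo.continuous)) (fun x hx => by simp [hzu x hx])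
  have hik1b : Integrable (fun x => u x * starRingEnd ℂ (opR n b (opR n a u) x)) :=
    hintC _ (hcu.mul (continuous_star.comp hbA.continuous)) (fun x hx => by simp [hzu x hx])
  have hik2 : Integrable (fun x => u x * starRingEnd ℂ (divR n a x * opR n b u x)) :=
    hintC _ (hcu.mul (continuous_star.comp (hcdA.mul hcBo))) (fun x hx => by simp [hzu x hx])
  have hik3 : Integrable (fun x => u x * starRingEnd ℂ (divR n b x * opR n a u x)) :=
    hintC _ (hcu.mul (continuous_star.comp (hcdB.mul hcA))) (fun x hx => by simp [hzu x hx])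
  have hirb : Integrable (fun x => (((divR n b x).im : ℂ)) * opR n a u x
      * starRingEnd ℂ (u x)) :=
    hintC _ (((Complex.continuous_ofReal.comp (Complex.continuous_im.comp hcdB)).mul hcA).mul
      (continuous_star.comp hcu)) (fun x hx => by simp [hzu x hx])
  -- Step 1: split the LHS integral into four pieces
  have h12 : Integrable (fun x => Complex.I * (opR n a u x * starRingEnd ℂ (opR n b u x))
      + Complex.I * (divR n a x * u x * starRingEnd ℂ (opR n b u x))) := hic1.add hic2
  have h123 : Integrable (fun x => Complex.I * (opR n a u x * starRingEnd ℂ (opR n b u x))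
      + Complex.I * (divR n a x * u x * starRingEnd ℂ (opR n b u x))
      + opR n b u x * starRingEnd ℂ (opR n b u x)) := h12.add hic3
  have hbig : (∫ x, ((opR n a u x + divR n a x * u x)
          - Complex.I * (opR n b u x + divR n b x * u x)) *
        (starRingEnd ℂ) (Complex.I * (-(opR n b u x))))
      = (∫ x, Complex.I * (opR n a u x * starRingEnd ℂ (opR n b u x)))
        + (∫ x, Complex.I * (divR n a x * u x * starRingEnd ℂ (opR n b u x)))
        + (∫ x, opR n b u x * starRingEnd ℂ (opR n b u x))
        + (∫ x, divR n b x * u x * starRingEnd ℂ (opR n b u x)) := by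
    have hpt : ∀ x, ((opR n a u x + divR n a x * u x)
          - Complex.I * (opR n b u x + divR n b x * u x)) *
        (starRingEnd ℂ) (Complex.I * (-(opR n b u x)))
        = Complex.I * (opR n a u x * starRingEnd ℂ (opR n b u x))
          + Complex.I * (divR n a x * u x * starRingEnd ℂ (opR n b u x))
          + opR n b u x * starRingEnd ℂ (opR n b u x)
          + divR n b x * u x * starRingEnd ℂ (opR n b u x) := by
      intro x
      simp only [map_mul, map_neg, Complex.conj_I]
      linear_combination (-(u x * divR n b x * starRingEnd ℂ (opR n b u x))
        - opR n b u x * starRingEnd ℂ (opR n b u x)) * Complex.I_sq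
    calc (∫ x, ((opR n a u x + divR n a x * u x)
          - Complex.I * (opR n b u x + divR n b x * u x)) *
        (starRingEnd ℂ) (Complex.I * (-(opR n b u x))))
        = ∫ x, (Complex.I * (opR n a u x * starRingEnd ℂ (opR n b u x))
          + Complex.I * (divR n a x * u x * starRingEnd ℂ (opR n b u x))
          + opR n b u x * starRingEnd ℂ (opR n b u x)
          + divR n b x * u x * starRingEnd ℂ (opR n b u x)) :=
          integral_congr_ae (Filter.Eventually.of_forall fun x => hpt x)
      _ = _ := by rw [integral_add h123 hic4, integral_add h12 hic3, integral_add hic1 hic2]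
  -- abbreviations for complex integrals
  have hJ1c : (starRingEnd ℂ) (∫ x, opR n a u x * starRingEnd ℂ (opR n b u x))
      = ∫ x, opR n b u x * starRingEnd ℂ (opR n a u x) := by
    rw [← integral_conj]
    refine integral_congr_ae (Filter.Eventually.of_forall fun x => ?_)
    simp only [map_mul, Complex.conj_conj]
    ring
  have hibp1 := ibp_opR a ha u (opR n b u) hu hBo hus
  have hibp2 := ibp_opR b hb u (opR n a u) hu hA hus
  have hK1 : (∫ x, u x * starRingEnd ℂ (opR n a (opR n b u) x))
      - (∫ x, u x * starRingEnd ℂ (opR n b (opR n a u) x))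
      = ∫ x, u x * starRingEnd ℂ (opR n a (opR n b u) x - opR n b (opR n a u) x) := by
    rw [← integral_sub hik1a hik1b]
    refine integral_congr_ae (Filter.Eventually.of_forall fun x => ?_)
    simp only [map_sub]
    ring
  -- the key identity: J1 - conj J1 = K1 + K2 - K3
  have hdiff : (∫ x, opR n a u x * starRingEnd ℂ (opR n b u x))
      - (starRingEnd ℂ) (∫ x, opR n a u x * starRingEnd ℂ (opR n b u x))
      = (∫ x, u x * starRingEnd ℂ (opR n a (opR n b u) x - opR n b (opR n a u) x))
        + (∫ x, u x * starRingEnd ℂ (divR n a x * opR n b u x))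
        - (∫ x, u x * starRingEnd ℂ (divR n b x * opR n a u x)) := by
    rw [hJ1c, hibp1, hibp2, ← hK1]
    ring
  -- (I*K2).re in terms of the c2 integral
  have hK2re : (Complex.I * ∫ x, u x * starRingEnd ℂ (divR n a x * opR n b u x)).re
      = -(∫ x, Complex.I * (divR n a x * u x * starRingEnd ℂ (opR n b u x))).re := by
    have h1 : (∫ x, Complex.I * (u x * starRingEnd ℂ (divR n a x * opR n b u x)))
        = -∫ x, Complex.I * (divR n a x * u x * starRingEnd ℂ (opR n b u x)) := by
      rw [← integral_neg]
      refine integral_congr_ae (Filter.Eventually.of_forall fun x => ?_)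
      simp only [map_mul, divR_conj]
      ring
    rw [← integral_const_mul, h1, Complex.neg_re]
  -- (I*K3).re in terms of the statement's integral
  have hK3re : (Complex.I * ∫ x, u x * starRingEnd ℂ (divR n b x * opR n a u x)).re
      = (∫ x, (((divR n b x).im : ℂ)) * opR n a u x * (starRingEnd ℂ) (u x)).re := by
    have hptw : ∀ x, Complex.I * (u x * starRingEnd ℂ (divR n b x * opR n a u x))
        = ((divR n b x).im : ℂ) * u x * starRingEnd ℂ (opR n a u x) := by
      intro x
      simp only [map_mul, divR_conj]
      have h2 : Complex.I * -divR n b x = ((divR n b x).im : ℂ) := by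
        apply Complex.ext <;>
          simp [Complex.mul_re, Complex.mul_im, divR_re]
      linear_combination (u x * starRingEnd ℂ (opR n a u x)) * h2
    have hint5 : Integrable (fun x => ((divR n b x).im : ℂ) * u x
        * starRingEnd ℂ (opR n a u x)) :=
      hintC _ (((Complex.continuous_ofReal.comp (Complex.continuous_im.comp hcdB)).mul hcu).mul
        (continuous_star.comp hcA)) (fun x hx => by simp [hzu x hx])
    rw [← integral_const_mul, integral_congr_ae (Filter.Eventually.of_forall hptw),
      ← hre_int _ hint5, ← hre_int _ hirb]
    refine integral_congr_ae (Filter.Eventually.of_forall fun x => ?_)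
    exact re_real_mul_conj_comm _ _ _
  -- assemble the identity
  have hT1 : 2 * (∫ x, Complex.I * (opR n a u x * starRingEnd ℂ (opR n b u x))).re
      = (Complex.I * ∫ x, u x * starRingEnd ℂ (opR n a (opR n b u) x
            - opR n b (opR n a u) x)).re
        - (∫ x, Complex.I * (divR n a x * u x * starRingEnd ℂ (opR n b u x))).re
        - (∫ x, (((divR n b x).im : ℂ)) * opR n a u x * (starRingEnd ℂ) (u x)).re := by
    rw [integral_const_mul, two_re_I_mul, hdiff]
    rw [show Complex.I * ((∫ x, u x * starRingEnd ℂ (opR n a (opR n b u) x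
            - opR n b (opR n a u) x))
        + (∫ x, u x * starRingEnd ℂ (divR n a x * opR n b u x))
        - (∫ x, u x * starRingEnd ℂ (divR n b x * opR n a u x)))
      = Complex.I * (∫ x, u x * starRingEnd ℂ (opR n a (opR n b u) x
            - opR n b (opR n a u) x))
        + Complex.I * (∫ x, u x * starRingEnd ℂ (divR n a x * opR n b u x))
        - Complex.I * (∫ x, u x * starRingEnd ℂ (divR n b x * opR n a u x)) from by ring]
    rw [Complex.sub_re, Complex.add_re, hK2re, hK3re]
    ring
  -- the full identity for the doubled LHS
  have hEQ : 2 * (∫ x, ((opR n a u x + divR n a x * u x)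
          - Complex.I * (opR n b u x + divR n b x * u x)) *
        (starRingEnd ℂ) (Complex.I * (-(opR n b u x)))).re
      = (Complex.I * ∫ x, u x * starRingEnd ℂ (opR n a (opR n b u) x
            - opR n b (opR n a u) x)).re
        + (∫ x, Complex.I * (divR n a x * u x * starRingEnd ℂ (opR n b u x))).re
        - (∫ x, (((divR n b x).im : ℂ)) * opR n a u x * (starRingEnd ℂ) (u x)).re
        + 2 * (∫ x, ‖opR n b u x‖ ^ 2)
        + 2 * (∫ x, divR n b x * u x * starRingEnd ℂ (opR n b u x)).re := by
    have hc3re : (∫ x, opR n b u x * starRingEnd ℂ (opR n b u x)).re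
        = ∫ x, ‖opR n b u x‖ ^ 2 := by
      rw [← hre_int _ hic3]
      exact integral_congr_ae (Filter.Eventually.of_forall fun x => mul_conj_re_eq_normsq _)
    rw [hbig, Complex.add_re, Complex.add_re, Complex.add_re, hc3re]
    linarith [hT1]
  rw [hEQ]
  -- bounds
  have hbddA : BddAbove ((fun x => ‖divR n a x‖) '' K) := (hK.image hcdA.norm).bddAbove
  have hbddB : BddAbove ((fun x => ‖divR n b x‖) '' K) := (hK.image hcdB.norm).bddAbove
  have hMA : ∀ x, ‖divR n a x * u x‖ ≤ sSup ((fun x => ‖divR n a x‖) '' K) * ‖u x‖ := by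
    intro x
    by_cases hx : x ∈ tsupport u
    · rw [norm_mul]
      exact mul_le_mul_of_nonneg_right (le_csSup hbddA ⟨x, huK hx, rfl⟩) (norm_nonneg _)
    · simp [hzu x hx]
  have hMB : ∀ x, ‖divR n b x * u x‖ ≤ sSup ((fun x => ‖divR n b x‖) '' K) * ‖u x‖ := by
    intro x
    by_cases hx : x ∈ tsupport u
    · rw [norm_mul]
      exact mul_le_mul_of_nonneg_right (le_csSup hbddB ⟨x, huK hx, rfl⟩) (norm_nonneg _)
    · simp [hzu x hx]
  -- bound 1 : commutator term
  have hb1 : -(1 / (2 * δ₁)) * (∫ x, ‖u x‖ ^ 2)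
      - (δ₁ / 2) * (∫ x, ‖opR n a (opR n b u) x - opR n b (opR n a u) x‖ ^ 2)
      ≤ (Complex.I * ∫ x, u x * starRingEnd ℂ (opR n a (opR n b u) x
            - opR n b (opR n a u) x)).re := by
    have hswap : Complex.I * (∫ x, u x * starRingEnd ℂ (opR n a (opR n b u) x
        - opR n b (opR n a u) x))
        = ∫ x, Complex.I * (u x * starRingEnd ℂ (opR n a (opR n b u) x
            - opR n b (opR n a u) x)) := (integral_const_mul _ _).symm
    rw [hswap, ← hre_int _ (hik1.const_mul Complex.I)]
    have hlow : Integrable (fun x => -(1 / (2 * δ₁)) * ‖u x‖ ^ 2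
        - (δ₁ / 2) * ‖opR n a (opR n b u) x - opR n b (opR n a u) x‖ ^ 2) :=
      (hiu2.const_mul _).sub (hiC2.const_mul _)
    have hup : Integrable (fun x => (Complex.I * (u x * starRingEnd ℂ (opR n a (opR n b u) x
        - opR n b (opR n a u) x))).re) :=
      hintR _ (Complex.continuous_re.comp (continuous_const.mul
        (hcu.mul (continuous_star.comp hcC)))) (fun x hx => by simp [hzu x hx])
    have hmono := integral_mono hlow hup (fun x => by
      have := pt_bound δ₁ hδ₁ Complex.I (u x)
        (opR n a (opR n b u) x - opR n b (opR n a u) x) (le_of_eq Complex.norm_I)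
      beta_reduce
      linarith [this])
    calc -(1 / (2 * δ₁)) * (∫ x, ‖u x‖ ^ 2)
        - (δ₁ / 2) * (∫ x, ‖opR n a (opR n b u) x - opR n b (opR n a u) x‖ ^ 2)
        = ∫ x, (-(1 / (2 * δ₁)) * ‖u x‖ ^ 2
          - (δ₁ / 2) * ‖opR n a (opR n b u) x - opR n b (opR n a u) x‖ ^ 2) := by
          rw [integral_sub (hiu2.const_mul _) (hiC2.const_mul _),
            integral_const_mul, integral_const_mul]
      _ ≤ _ := hmono
  -- bound 2 : δ₀ term
  have hb2 : -(1 / (2 * δ₀)) * (sSup ((fun x => ‖divR n a x‖) '' K)) ^ 2 * (∫ x, ‖u x‖ ^ 2)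
      - (δ₀ / 2) * (∫ x, ‖opR n b u x‖ ^ 2)
      ≤ (∫ x, Complex.I * (divR n a x * u x * starRingEnd ℂ (opR n b u x))).re := by
    rw [← hre_int _ hic2]
    have hlow : Integrable (fun x => -(1 / (2 * δ₀))
        * (sSup ((fun x => ‖divR n a x‖) '' K)) ^ 2 * ‖u x‖ ^ 2
        - (δ₀ / 2) * ‖opR n b u x‖ ^ 2) :=
      (hiu2.const_mul _).sub (hiBo2.const_mul _)
    have hup : Integrable (fun x => (Complex.I * (divR n a x * u x
        * starRingEnd ℂ (opR n b u x))).re) :=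
      hintR _ (Complex.continuous_re.comp (continuous_const.mul
        ((hcdA.mul hcu).mul (continuous_star.comp hcBo)))) (fun x hx => by simp [hzu x hx])
    have hmono := integral_mono hlow hup (fun x => by
      have h1 := pt_bound δ₀ hδ₀ Complex.I (divR n a x * u x) (opR n b u x)
        (le_of_eq Complex.norm_I)
      have h2 : ‖divR n a x * u x‖ ^ 2
          ≤ (sSup ((fun x => ‖divR n a x‖) '' K)) ^ 2 * ‖u x‖ ^ 2 := by
        calc ‖divR n a x * u x‖ ^ 2
            ≤ (sSup ((fun x => ‖divR n a x‖) '' K) * ‖u x‖) ^ 2 :=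
              pow_le_pow_left₀ (norm_nonneg _) (hMA x) 2
          _ = _ := by ring
      have h3 : (0:ℝ) < 1 / (2 * δ₀) := by positivity
      have h4 := mul_le_mul_of_nonneg_left h2 (le_of_lt h3)
      beta_reduce
      linarith)
    calc -(1 / (2 * δ₀)) * (sSup ((fun x => ‖divR n a x‖) '' K)) ^ 2 * (∫ x, ‖u x‖ ^ 2)
        - (δ₀ / 2) * (∫ x, ‖opR n b u x‖ ^ 2)
        = ∫ x, (-(1 / (2 * δ₀)) * (sSup ((fun x => ‖divR n a x‖) '' K)) ^ 2 * ‖u x‖ ^ 2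
          - (δ₀ / 2) * ‖opR n b u x‖ ^ 2) := by
          rw [integral_sub (hiu2.const_mul _) (hiBo2.const_mul _),
            integral_const_mul, integral_const_mul]
      _ ≤ _ := hmono
  -- bound 3 : δ₂ term
  have hb3 : -(1 / (2 * δ₂)) * (sSup ((fun x => ‖divR n b x‖) '' K)) ^ 2 * (∫ x, ‖u x‖ ^ 2)
      - (δ₂ / 2) * (∫ x, ‖opR n b u x‖ ^ 2)
      ≤ (∫ x, divR n b x * u x * starRingEnd ℂ (opR n b u x)).re := by
    rw [← hre_int _ hic4]
    have hlow : Integrable (fun x => -(1 / (2 * δ₂))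
        * (sSup ((fun x => ‖divR n b x‖) '' K)) ^ 2 * ‖u x‖ ^ 2
        - (δ₂ / 2) * ‖opR n b u x‖ ^ 2) :=
      (hiu2.const_mul _).sub (hiBo2.const_mul _)
    have hup : Integrable (fun x => (divR n b x * u x * starRingEnd ℂ (opR n b u x)).re) :=
      hintR _ (Complex.continuous_re.comp
        ((hcdB.mul hcu).mul (continuous_star.comp hcBo))) (fun x hx => by simp [hzu x hx])
    have hmono := integral_mono hlow hup (fun x => by
      have h1 := pt_bound' δ₂ hδ₂ (divR n b x * u x) (opR n b u x)
      have h2 : ‖divR n b x * u x‖ ^ 2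
          ≤ (sSup ((fun x => ‖divR n b x‖) '' K)) ^ 2 * ‖u x‖ ^ 2 := by
        calc ‖divR n b x * u x‖ ^ 2
            ≤ (sSup ((fun x => ‖divR n b x‖) '' K) * ‖u x‖) ^ 2 :=
              pow_le_pow_left₀ (norm_nonneg _) (hMB x) 2
          _ = _ := by ring
      have h3 : (0:ℝ) < 1 / (2 * δ₂) := by positivity
      have h4 := mul_le_mul_of_nonneg_left h2 (le_of_lt h3)
      have h4 := mul_le_mul_of_nonneg_left h2 (le_of_lt h3)
      beta_reduce
      linarith)
    calc -(1 / (2 * δ₂)) * (sSup ((fun x => ‖divR n b x‖) '' K)) ^ 2 * (∫ x, ‖u x‖ ^ 2)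
        - (δ₂ / 2) * (∫ x, ‖opR n b u x‖ ^ 2)
        = ∫ x, (-(1 / (2 * δ₂)) * (sSup ((fun x => ‖divR n b x‖) '' K)) ^ 2 * ‖u x‖ ^ 2
          - (δ₂ / 2) * ‖opR n b u x‖ ^ 2) := by
          rw [integral_sub (hiu2.const_mul _) (hiBo2.const_mul _),
            integral_const_mul, integral_const_mul]
      _ ≤ _ := hmono
  have hfrac : 1 / δ₂ = 2 * (1 / (2 * δ₂)) := by field_simp
  rw [ge_iff_le, hfrac]
  linarith [hb1, hb2, hb3]
end
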